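/- Every infinite lexicographic function ℓ⟨μ⟩ for 0 ≤ μ ≤ 1 has total influence at most 4/3; equivalently, for μ = Σ_{i≥0} 2^{−k_i} with 1 ≤ k_0 < k_1 < ⋯, we have Σ_{i≥0} (k_i − 2i)·2^{1−k_i} ≤ 4/3. -/

import Mathlib

noncomputable section

/-- The k-th binary digit of μ (k ≥ 1 are the fractional positions). -/
def binBit (μ : ℝ) (k : ℕ) : ℕ := (⌊μ * 2 ^ k⌋).toNat % 2

/-- Number of 1-bits of μ at positions strictly before k. -/
def onesBefore (μ : ℝ) (k : ℕ) : ℕ := ∑ j ∈ Finset.range k, binBit μ j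

/-- Total influence of the infinite lexicographic function ℓ⟨μ⟩:
if μ = Σ_i 2^{-k_i} with 1 ≤ k_0 < k_1 < ⋯ the positions of the 1-bits,
this equals Σ_i (k_i − 2i) · 2^{1−k_i}. -/
def lexInfluence (μ : ℝ) : ℝ :=
  ∑' k : ℕ, (binBit μ k : ℝ) * ((k : ℝ) - 2 * (onesBefore μ k : ℝ)) * (2 : ℝ) ^ (1 - (k : ℤ))

/-!
Read the bits of μ one at a time. A one-bit at position `k` preceded by `o` earlier one-bits
contributes `(k - 2o) · 2^(1-k) = m · 2^(1-m) · 4^(-o)` with `m = k - 2o`, and `m ≤ 2^(m-1)` for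
every integer `m`, so the `o`-th one-bit contributes at most `4^(-o)`. Hence every partial sum is
bounded by a partial sum of `∑ 4^(-o) = 4/3`.
-/

open Finset

theorem Int.cast_le_two_zpow_sub_one (m : ℤ) : (m : ℝ) ≤ (2 : ℝ) ^ (m - 1) := by
  rcases le_or_gt m 0 with hm | hm
  · exact (Int.cast_nonpos.mpr hm).trans (zpow_pos two_pos _).le
  · obtain ⟨j, rfl⟩ : ∃ j : ℕ, m = j + 1 := ⟨(m - 1).toNat, by omega⟩
    rw [add_sub_cancel_right, zpow_natCast]
    exact_mod_cast Nat.lt_two_pow_self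

theorem sub_two_mul_mul_two_zpow_le (k o : ℕ) :
    ((k : ℝ) - 2 * o) * (2 : ℝ) ^ (1 - (k : ℤ)) ≤ (4 : ℝ)⁻¹ ^ o := by
  obtain ⟨m, hm⟩ : ∃ m : ℤ, m = k - 2 * o := ⟨_, rfl⟩
  have hcast : (k : ℝ) - 2 * o = m := by rw [hm]; push_cast; ring
  have h4 : (4 : ℝ)⁻¹ ^ o = (2 : ℝ) ^ (m - 1) * (2 : ℝ) ^ (1 - (k : ℤ)) := by
    rw [← zpow_add₀ two_ne_zero, show m - 1 + (1 - k) = -((2 * o : ℕ) : ℤ) by omega,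
      zpow_neg, zpow_natCast, pow_mul, inv_pow]
    norm_num
  rw [hcast, h4]
  exact mul_le_mul_of_nonneg_right (Int.cast_le_two_zpow_sub_one m) (zpow_pos two_pos _).le

def bitInfluenceTerm (b : ℕ → ℕ) (k : ℕ) : ℝ :=
  (b k : ℝ) * ((k : ℝ) - 2 * ((∑ j ∈ range k, b j : ℕ) : ℝ)) * (2 : ℝ) ^ (1 - (k : ℤ))

section BitSequence

variable {b : ℕ → ℕ}

theorem sum_range_bitInfluenceTerm_le (hb : ∀ k, b k ≤ 1) (n : ℕ) :
    ∑ k ∈ range n, bitInfluenceTerm b k ≤ ∑ o ∈ range (∑ j ∈ range n, b j), (4 : ℝ)⁻¹ ^ o := by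
  induction n with
  | zero => simp
  | succ n ih =>
    rw [sum_range_succ, sum_range_succ b]
    rcases Nat.le_one_iff_eq_zero_or_eq_one.mp (hb n) with hbn | hbn
    · simpa [bitInfluenceTerm, hbn] using ih
    · rw [hbn, sum_range_succ]
      have hterm : bitInfluenceTerm b n ≤ (4 : ℝ)⁻¹ ^ ∑ j ∈ range n, b j := by
        simpa only [bitInfluenceTerm, hbn, Nat.cast_one, one_mul]
          using sub_two_mul_mul_two_zpow_le n (∑ j ∈ range n, b j)
      linarith

theorem abs_bitInfluenceTerm_le (hb : ∀ k, b k ≤ 1) (k : ℕ) :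
    |bitInfluenceTerm b k| ≤ 2 * ((k : ℝ) * (2 : ℝ)⁻¹ ^ k) := by
  have hones : ((∑ j ∈ range k, b j : ℕ) : ℝ) ≤ k := by
    exact_mod_cast (sum_le_sum fun j _ => hb j).trans_eq (by simp)
  have hbit : |(b k : ℝ)| ≤ 1 := by
    rw [Nat.abs_cast]
    exact_mod_cast hb k
  have hdiff : |(k : ℝ) - 2 * ((∑ j ∈ range k, b j : ℕ) : ℝ)| ≤ k := by
    rw [abs_le]
    constructor <;> linarith [Nat.cast_nonneg (α := ℝ) (∑ j ∈ range k, b j)]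
  have hpow : |(2 : ℝ) ^ (1 - (k : ℤ))| = 2 * (2 : ℝ)⁻¹ ^ k := by
    rw [abs_of_pos (zpow_pos two_pos _), zpow_sub₀ two_ne_zero, zpow_one, zpow_natCast, inv_pow,
      div_eq_mul_inv]
  rw [bitInfluenceTerm, abs_mul, abs_mul, hpow]
  calc |(b k : ℝ)| * |(k : ℝ) - 2 * ((∑ j ∈ range k, b j : ℕ) : ℝ)| * (2 * (2 : ℝ)⁻¹ ^ k)
      ≤ 1 * k * (2 * (2 : ℝ)⁻¹ ^ k) := by gcongr
    _ = 2 * (k * (2 : ℝ)⁻¹ ^ k) := by ring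

theorem summable_bitInfluenceTerm (hb : ∀ k, b k ≤ 1) : Summable (bitInfluenceTerm b) := by
  have hgeom : Summable fun k : ℕ => (k : ℝ) * (2 : ℝ)⁻¹ ^ k := by
    simpa using summable_pow_mul_geometric_of_norm_lt_one 1 (by norm_num : ‖(2 : ℝ)⁻¹‖ < 1)
  exact .of_norm_bounded (hgeom.mul_left 2) (abs_bitInfluenceTerm_le hb)

theorem tsum_bitInfluenceTerm_le (hb : ∀ k, b k ≤ 1) : ∑' k, bitInfluenceTerm b k ≤ 4 / 3 := by
  refine (summable_bitInfluenceTerm hb).tsum_le_of_sum_range_le fun n => ?_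
  calc ∑ k ∈ range n, bitInfluenceTerm b k
      ≤ ∑ o ∈ range (∑ j ∈ range n, b j), (4 : ℝ)⁻¹ ^ o := sum_range_bitInfluenceTerm_le hb n
    _ ≤ ∑' o : ℕ, (4 : ℝ)⁻¹ ^ o :=
      (summable_geometric_of_lt_one (by norm_num) (by norm_num)).sum_le_tsum _
        fun o _ => by positivity
    _ = 4 / 3 := by rw [tsum_geometric_of_lt_one (by norm_num) (by norm_num)]; norm_num

end BitSequence

theorem binBit_le_one (μ : ℝ) (k : ℕ) : binBit μ k ≤ 1 :=
  Nat.lt_succ_iff.mp (Nat.mod_lt _ two_pos)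

end

theorem lexInfluence_le_general (μ : ℝ) : lexInfluence μ ≤ 4 / 3 :=
  tsum_bitInfluenceTerm_le (binBit_le_one μ)

/-- Every infinite lexicographic function has total influence at most 4/3. -/
theorem lexInfluence_le (μ : ℝ) (h0 : 0 ≤ μ) (h1 : μ ≤ 1) : lexInfluence μ ≤ 4 / 3 :=
  lexInfluence_le_general μ
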